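/- Let 𝔤 be a Lie algebra with Lie–Poisson structure π on 𝔤*, and let a gl(n)-valued 1-cochain Ξ = Ξ₀ + R on 𝔤* satisfy the Maurer–Cartan equation d_π Ξ + ½[Ξ,Ξ]_Lie = 0, where Ξ₀ is the constant term (value at 0) and Ξ₀ itself satisfies Maurer–Cartan. Let φ^t(x) = t^{-1}x for t ∈ (0,1]. Then for each t, the field Ξ_t := Ξ₀ + t·(φ^t)_* R also satisfies the Maurer–Cartan equation d_π Ξ_t + ½[Ξ_t, Ξ_t]_Lie = 0, and Ξ_t extends smoothly to t = 0 with Ξ₀ as the value. -/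

import Mathlib

/-!
STATEMENT 8 (core computation in the proof of Theorem 4.1).  Let `𝔤` be a Lie algebra,
presented in a basis as `Fin d → ℝ` with bracket `ℓ`, and let `𝔤* = Fin d → ℝ` carry
the Lie–Poisson structure `π`.  A `gl(n)`-valued vector field on `𝔤*` is a map
`Z : 𝔤* → (𝔤 → gl(n,ℂ))`, linear in the second slot (the value of the field on constant
1-forms).  The Maurer–Cartan equation `d_π Z + ½[Z,Z]_Lie = 0`, evaluated on constant
1-forms `α, β ∈ 𝔤`, reads
  `L_{π♯α}(Zβ) − L_{π♯β}(Zα) − Z([α,β]) + [Zα, Zβ] = 0`,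
with `π♯α (x) = (j ↦ ⟨x, [α, e_j]⟩)`.  Writing `Ξ = Ξ₀ + R` with `Ξ₀ = Z(0)` the
constant term, and `φᵗ(x) = t⁻¹x`, the rescaled field `Ξ_t := Ξ₀ + t·(φᵗ)_*R` is given by
`Ξ_t(x) = Z(t•x)`.  If `Z` and its constant term satisfy Maurer–Cartan then so does
`Ξ_t` for every `t ∈ (0,1]`, and `Ξ_t` extends smoothly to `t = 0` with value `Ξ₀`.
-/

/-- Matrix multiplication on `gl(n,ℂ)` presented as `Fin n → Fin n → ℂ`. -/
noncomputable def mmul (n : ℕ) (A B : Fin n → Fin n → ℂ) : Fin n → Fin n → ℂ :=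
  fun i j => ∑ k, A i k * B k j

/-- The Hamiltonian vector `π♯α` of the constant 1-form `α ∈ 𝔤` at `x ∈ 𝔤*`. -/
noncomputable def hamVec (d : ℕ)
    (ℓ : (Fin d → ℝ) →ₗ[ℝ] (Fin d → ℝ) →ₗ[ℝ] (Fin d → ℝ))
    (α x : Fin d → ℝ) : Fin d → ℝ :=
  fun j => ∑ i, x i * (ℓ α (Pi.single j 1)) i

/-- The Maurer–Cartan equation `d_π Z + ½ [Z,Z]_Lie = 0` for a `gl(n,ℂ)`-valued vector
field `Z` on `𝔤*`, evaluated on constant 1-forms. -/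
noncomputable def MaurerCartan (d n : ℕ)
    (ℓ : (Fin d → ℝ) →ₗ[ℝ] (Fin d → ℝ) →ₗ[ℝ] (Fin d → ℝ))
    (Z : (Fin d → ℝ) → (Fin d → ℝ) → (Fin n → Fin n → ℂ)) : Prop :=
  ∀ (x α β : Fin d → ℝ),
    fderiv ℝ (fun y => Z y β) x (hamVec d ℓ α x) -
      fderiv ℝ (fun y => Z y α) x (hamVec d ℓ β x) -
      Z x (ℓ α β) + (mmul n (Z x α) (Z x β) - mmul n (Z x β) (Z x α)) = 0

theorem rescaled_field_satisfies_maurer_cartan (d n : ℕ)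
    (ℓ : (Fin d → ℝ) →ₗ[ℝ] (Fin d → ℝ) →ₗ[ℝ] (Fin d → ℝ))
    (hskew : ∀ x y, ℓ x y = - ℓ y x)
    (hjacobi : ∀ x y z, ℓ x (ℓ y z) = ℓ (ℓ x y) z + ℓ y (ℓ x z))
    (Z : (Fin d → ℝ) → (Fin d → ℝ) → (Fin n → Fin n → ℂ))
    (hlin : ∀ x, IsLinearMap ℝ (Z x))
    (hsmooth : ∀ α, ContDiff ℝ (⊤ : ℕ∞) (fun y => Z y α))
    -- `Ξ = Ξ₀ + R` satisfies Maurer–Cartan …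
    (hMC : MaurerCartan d n ℓ Z)
    -- … and so does its constant term `Ξ₀ = Z(0)`
    (hMC0 : MaurerCartan d n ℓ (fun _ => Z 0)) :
    -- then `Ξ_t = Ξ₀ + t (φᵗ)_* R`, i.e. `x ↦ Z(t•x)`, satisfies Maurer–Cartan for all
    -- `t ∈ [0,1]`, …
    (∀ t : ℝ, t ∈ Set.Icc (0 : ℝ) 1 → MaurerCartan d n ℓ (fun x => Z (t • x))) ∧
    -- … extends to `t = 0` with value the constant field `Ξ₀`, …
    ((fun x : Fin d → ℝ => Z ((0 : ℝ) • x)) = fun _ => Z 0) ∧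
    -- … and the extension is smooth in `(t, x)` jointly
    (∀ α, ContDiff ℝ (⊤ : ℕ∞) (fun p : ℝ × (Fin d → ℝ) => Z (p.1 • p.2) α)) := by
  constructor
  · intro t _ x α β
    have key : ∀ γ : Fin d → ℝ,
        fderiv ℝ (fun y => Z (t • y) γ) x = (fderiv ℝ (fun y => Z y γ) (t • x)).comp
          (t • (ContinuousLinearMap.id ℝ (Fin d → ℝ))) := by
      intro γ
      have hf : HasFDerivAt (fun y => Z y γ) (fderiv ℝ (fun y => Z y γ) (t • x)) (t • x) :=
        (((hsmooth γ).differentiable (by simp)) (t • x)).hasFDerivAt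
      have hg : HasFDerivAt (fun y : Fin d → ℝ => t • y)
          (t • (ContinuousLinearMap.id ℝ (Fin d → ℝ))) x := (hasFDerivAt_id x).const_smul t
      exact (hf.comp x hg).fderiv
    have hham : ∀ γ : Fin d → ℝ, hamVec d ℓ γ (t • x) = t • hamVec d ℓ γ x := by
      intro γ
      funext j
      simp [hamVec, Finset.mul_sum, Pi.smul_apply, smul_eq_mul, mul_assoc]
    have := hMC (t • x) α β
    simpa [key, hham] using this
  constructor
  · funext x
    simp
  · intro α
    exact (hsmooth α).comp (contDiff_fst.smul contDiff_snd)
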